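/- Every invertible hermitian matrix over F_{p²} is congruent to the identity: if A ∈ GL_N(F_{p²}) satisfies ᵗσ(A) = A, then there exists g ∈ GL_N(F_{p²}) with ᵗσ(g) · g = A. -/

import Mathlib

open Matrix

namespace Stmt4Aux

variable {F : Type*} [Field F] (σ : F →+* F)

/-- Conjugate-transpose of a matrix w.r.t. a ring endomorphism `σ`. -/
def mstar {m n : Type*} (M : Matrix m n F) : Matrix n m F := (M.map σ)ᵀ

lemma mstar_apply {m n : Type*} (M : Matrix m n F) (i : n) (j : m) :
    mstar σ M i j = σ (M j i) := rfl

lemma mstar_mul {m n l : Type*} [Fintype n] (M : Matrix m n F) (N : Matrix n l F) :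
    mstar σ (M * N) = mstar σ N * mstar σ M := by
  unfold mstar
  rw [Matrix.map_mul (f := σ), Matrix.transpose_mul]

lemma mstar_one {n : Type*} [Fintype n] [DecidableEq n] :
    mstar σ (1 : Matrix n n F) = 1 := by
  unfold mstar
  rw [Matrix.map_one _ (map_zero σ) (map_one σ), Matrix.transpose_one]

lemma mstar_mstar (hinv : ∀ x, σ (σ x) = x) {m n : Type*} (M : Matrix m n F) :
    mstar σ (mstar σ M) = M := by
  ext i j; simp [mstar, hinv]

lemma mstar_sub {m n : Type*} (M N : Matrix m n F) :
    mstar σ (M - N) = mstar σ M - mstar σ N := by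
  ext i j; simp [mstar]

lemma mstar_neg {m n : Type*} (M : Matrix m n F) :
    mstar σ (-M) = -(mstar σ M) := by
  ext i j; simp [mstar]

lemma mstar_zero {m n : Type*} : mstar σ (0 : Matrix m n F) = 0 := by
  ext i j; simp [mstar]

lemma mstar_isUnit {n : Type*} [Fintype n] [DecidableEq n] {M : Matrix n n F}
    (h : IsUnit M) : IsUnit (mstar σ M) := by
  rw [Matrix.isUnit_iff_isUnit_det] at h ⊢
  have hd : (mstar σ M).det = σ M.det := by
    unfold mstar
    rw [Matrix.det_transpose, RingHom.map_det σ M, RingHom.mapMatrix_apply]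
  rw [hd]
  exact h.map σ

lemma mstar_submatrix {m n m' n' : Type*} (M : Matrix m n F) (f : m' → m) (g : n' → n) :
    mstar σ (M.submatrix f g) = (mstar σ M).submatrix g f := rfl

lemma mstar_fromBlocks {l m n o : Type*} (A : Matrix n l F) (B : Matrix n m F)
    (C : Matrix o l F) (D : Matrix o m F) :
    mstar σ (fromBlocks A B C D) =
      fromBlocks (mstar σ A) (mstar σ C) (mstar σ B) (mstar σ D) := by
  unfold mstar
  rw [Matrix.fromBlocks_map, Matrix.fromBlocks_transpose]

lemma congr_solve {n : Type*} [Fintype n] [DecidableEq n] (A P : Matrix n n F)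
    (hP : IsUnit P)
    (h : ∃ g : Matrix n n F, IsUnit g ∧ mstar σ g * g = mstar σ P * A * P) :
    ∃ g : Matrix n n F, IsUnit g ∧ mstar σ g * g = A := by
  obtain ⟨g, hg, hgeq⟩ := h
  obtain ⟨u, rfl⟩ := hP
  refine ⟨g * ↑u⁻¹, hg.mul (Units.isUnit _), ?_⟩
  rw [mstar_mul]
  calc mstar σ (↑u⁻¹ : Matrix n n F) * mstar σ g * (g * ↑u⁻¹)
      = mstar σ (↑u⁻¹ : Matrix n n F) * (mstar σ g * g) * ↑u⁻¹ := by
        simp only [mul_assoc]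
    _ = mstar σ (↑u⁻¹ : Matrix n n F) * (mstar σ (↑u : Matrix n n F) * A * ↑u) * ↑u⁻¹ := by
        rw [hgeq]
    _ = (mstar σ (↑u⁻¹ : Matrix n n F) * mstar σ (↑u : Matrix n n F)) * A *
          ((↑u : Matrix n n F) * ↑u⁻¹) := by
        simp only [mul_assoc]
    _ = A := by
        rw [← mstar_mul, Units.mul_inv, mstar_one, one_mul, mul_one]

lemma reindex_solve {m n : Type*} [Fintype m] [DecidableEq m] [Fintype n] [DecidableEq n]
    (e : m ≃ n) (A : Matrix n n F)
    (h : ∃ g : Matrix m m F, IsUnit g ∧ mstar σ g * g = A.submatrix e e) :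
    ∃ g : Matrix n n F, IsUnit g ∧ mstar σ g * g = A := by
  obtain ⟨g, hg, hgeq⟩ := h
  refine ⟨g.submatrix e.symm e.symm, ?_, ?_⟩
  · rw [Matrix.isUnit_iff_isUnit_det, Matrix.det_submatrix_equiv_self]
    exact (Matrix.isUnit_iff_isUnit_det g).mp hg
  · rw [mstar_submatrix, Matrix.submatrix_mul_equiv, hgeq, Matrix.submatrix_submatrix]
    have : (⇑e ∘ ⇑e.symm) = id := by
      funext x; simp
    rw [this, Matrix.submatrix_id_id]

/-- The norm map hits every nonzero element of the fixed field. -/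
lemma exists_norm_eq {p : ℕ} (hp : p.Prime) [Fintype F] (hcard : Fintype.card F = p ^ 2)
    {a : F} (ha : a ≠ 0) (hfix : a ^ p = a) : ∃ c : F, c ^ (p + 1) = a := by
  classical
  obtain ⟨g, hg⟩ := IsCyclic.exists_generator (α := Fˣ)
  set u : Fˣ := Units.mk0 a ha with hu
  obtain ⟨k, hk⟩ : ∃ k : ℕ, g ^ k = u := by
    have h1 := hg u
    rwa [← mem_powers_iff_mem_zpowers, Submonoid.mem_powers_iff] at h1
  have hord : orderOf g = p ^ 2 - 1 := by
    rw [orderOf_eq_card_of_forall_mem_zpowers hg, Nat.card_eq_fintype_card,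
      Fintype.card_units, hcard]
  have hup : u ^ (p - 1) = 1 := by
    have h1 : u ^ p = u := by
      ext
      push_cast
      simpa [hu] using hfix
    have h2 : u ^ (p - 1) * u = 1 * u := by
      rw [one_mul, ← pow_succ, Nat.sub_add_cancel hp.one_lt.le, h1]
    exact mul_right_cancel h2
  have hdvd : (p + 1) * (p - 1) ∣ k * (p - 1) := by
    have h1 : orderOf g ∣ k * (p - 1) := by
      rw [orderOf_dvd_iff_pow_eq_one, pow_mul, hk, hup]
    rw [hord] at h1
    have h2 : p ^ 2 - 1 = (p + 1) * (p - 1) := by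
      have := Nat.sq_sub_sq p 1
      simpa using this
    rwa [h2] at h1
  have hppos : 0 < p - 1 := by have := hp.two_le; omega
  obtain ⟨t, ht⟩ := (Nat.mul_dvd_mul_iff_right hppos).mp hdvd
  refine ⟨((g ^ t : Fˣ) : F), ?_⟩
  have hgt : (g ^ t) ^ (p + 1) = u := by
    rw [← pow_mul, mul_comm t (p + 1), ← ht, hk]
  calc ((g ^ t : Fˣ) : F) ^ (p + 1) = (((g ^ t) ^ (p + 1) : Fˣ) : F) := by push_cast; ring
    _ = a := by rw [hgt]; rfl

/-- There is an element not fixed by `x ↦ x ^ p`. -/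
lemma exists_nonfixed {p : ℕ} (hp : p.Prime) [Fintype F]
    (hcard : Fintype.card F = p ^ 2) : ∃ x : F, x ^ p ≠ x := by
  classical
  by_contra h
  push_neg at h
  set P : Polynomial F := Polynomial.X ^ p - Polynomial.X with hP
  have hdeg : P.natDegree = p := by
    rw [hP, Polynomial.natDegree_sub_eq_left_of_natDegree_lt, Polynomial.natDegree_X_pow]
    rw [Polynomial.natDegree_X_pow, Polynomial.natDegree_X]
    exact hp.one_lt
  have hPne : P ≠ 0 := by
    intro h0
    rw [h0, Polynomial.natDegree_zero] at hdeg
    exact hp.ne_zero hdeg.symm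
  have hsub : (Finset.univ : Finset F).val ≤ P.roots := by
    rw [Multiset.le_iff_count]
    intro x
    have hnd : Multiset.count x (Finset.univ : Finset F).val ≤ 1 :=
      Multiset.nodup_iff_count_le_one.mp Finset.univ.nodup x
    have hmem : x ∈ P.roots := by
      rw [Polynomial.mem_roots hPne]
      simp [hP, Polynomial.IsRoot, h x, sub_eq_zero]
    have := Multiset.one_le_count_iff_mem.mpr hmem
    omega
  have hcount : Fintype.card F ≤ p := by
    calc Fintype.card F = Multiset.card (Finset.univ : Finset F).val := rfl
      _ ≤ Multiset.card P.roots := Multiset.card_le_card hsub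
      _ ≤ P.natDegree := Polynomial.card_roots' P
      _ = p := hdeg
  rw [hcard] at hcount
  have : p < p ^ 2 := by
    calc p = p ^ 1 := (pow_one p).symm
      _ < p ^ 2 := Nat.pow_lt_pow_right hp.one_lt (by norm_num)
  omega

lemma charP_of {p : ℕ} (hp : p.Prime) [Fintype F]
    (hcard : Fintype.card F = p ^ 2) : CharP F p := by
  have h1 : CharP F (ringChar F) := ringChar.charP F
  obtain ⟨n, hqprime, hn⟩ := FiniteField.card F (ringChar F)
  have hdvd : ringChar F ∣ p ^ 2 := by
    rw [← hcard, hn]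
    exact dvd_pow_self (ringChar F) (by exact_mod_cast n.ne_zero)
  have heq : ringChar F = p :=
    (Nat.prime_dvd_prime_iff_eq hqprime hp).mp (hqprime.dvd_of_dvd_pow hdvd)
  exact heq ▸ h1

lemma sigma_dot {n : Type*} [Fintype n] (hinv : ∀ x, σ (σ x) = x) (A : Matrix n n F)
    (hherm : mstar σ A = A) (u v : n → F) :
    σ ((fun i => σ (u i)) ⬝ᵥ A.mulVec v) = (fun i => σ (v i)) ⬝ᵥ A.mulVec u := by
  have hA : ∀ i j, σ (A i j) = A j i := by
    intro i j
    conv_rhs => rw [← hherm]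
    rfl
  simp only [dotProduct, mulVec, dotProduct, map_sum, _root_.map_mul, hinv, hA,
    Finset.mul_sum]
  rw [Finset.sum_comm]
  refine Finset.sum_congr rfl fun j _ => Finset.sum_congr rfl fun i _ => by ring

lemma congr_entry {n : Type*} [Fintype n] (P A : Matrix n n F) (i : n) :
    (mstar σ P * A * P) i i = (fun k => σ (P k i)) ⬝ᵥ A.mulVec (fun k => P k i) := by
  simp only [Matrix.mul_apply, mstar_apply, dotProduct, mulVec,
    Finset.sum_mul, Finset.mul_sum]
  rw [Finset.sum_comm]
  refine Finset.sum_congr rfl fun k _ => Finset.sum_congr rfl fun l _ => by ring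

lemma exists_anisotropic {n : Type*} [Fintype n] [DecidableEq n] [Nonempty n]
    (hlam : ∃ l : F, σ l ≠ l) (A : Matrix n n F) (hA : IsUnit A) :
    ∃ v : n → F, (fun i => σ (v i)) ⬝ᵥ A.mulVec v ≠ 0 := by
  by_contra hc
  push_neg at hc
  obtain ⟨lam, hlamne⟩ := hlam
  set H : (n → F) → (n → F) → F := fun u v => (fun i => σ (u i)) ⬝ᵥ A.mulVec v with hH
  have hc' : ∀ w, H w w = 0 := hc
  have key : ∀ u v, H u v = 0 := by
    intro u v
    have h1 : H u v + H v u = 0 := by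
      have expand : H (u + v) (u + v) = H u u + (H u v + H v u) + H v v := by
        show (fun i => σ ((u + v) i)) ⬝ᵥ A.mulVec (u + v) = _
        have e1 : (fun i => σ ((u + v) i)) = (fun i => σ (u i)) + (fun i => σ (v i)) := by
          funext i; simp [map_add]
        rw [e1, Matrix.mulVec_add, add_dotProduct, dotProduct_add, dotProduct_add]
        show H u u + H u v + (H v u + H v v) = _
        ring
      have h := hc (u + v)
      rw [show (fun i => σ ((u + v) i)) ⬝ᵥ A.mulVec (u + v) = H (u + v) (u + v) from rfl,
        expand, hc' u, hc' v] at h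
      simpa using h
    have h2 : σ lam * H u v + lam * H v u = 0 := by
      have expand : H (lam • u + v) (lam • u + v) =
          σ lam * (lam * H u u) + σ lam * H u v + (lam * H v u + H v v) := by
        show (fun i => σ ((lam • u + v) i)) ⬝ᵥ A.mulVec (lam • u + v) = _
        have e1 : (fun i => σ ((lam • u + v) i)) =
            σ lam • (fun i => σ (u i)) + (fun i => σ (v i)) := by
          funext i
          simp [map_add, _root_.map_mul, smul_eq_mul]
        rw [e1, Matrix.mulVec_add, Matrix.mulVec_smul, add_dotProduct,
          dotProduct_add, dotProduct_add, smul_dotProduct, smul_dotProduct,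
          dotProduct_smul, dotProduct_smul]
        show σ lam * (lam * H u u) + σ lam * H u v + (lam * H v u + H v v) = _
        ring
      have h := hc (lam • u + v)
      rw [show (fun i => σ ((lam • u + v) i)) ⬝ᵥ A.mulVec (lam • u + v)
          = H (lam • u + v) (lam • u + v) from rfl, expand, hc' u, hc' v] at h
      simpa using h
    have h3 : (σ lam - lam) * H u v = 0 := by linear_combination h2 - lam * h1
    rcases mul_eq_zero.mp h3 with h4 | h4
    · exact absurd (sub_eq_zero.mp h4) hlamne
    · exact h4
  have hA0 : A = 0 := by
    ext i j
    have hk := key (Pi.single i 1) (Pi.single j 1)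
    have e1 : (fun k => σ ((Pi.single i (1 : F) : n → F) k)) = Pi.single i (1 : F) := by
      funext k
      simp [Pi.single_apply, apply_ite σ, _root_.map_one, _root_.map_zero]
    rw [hH] at hk
    simp only [e1] at hk
    rw [Matrix.mulVec_single, single_dotProduct] at hk
    simpa using hk
  rw [hA0, Matrix.isUnit_iff_isUnit_det, Matrix.det_zero,
    isUnit_zero_iff] at hA
  exact one_ne_zero hA.symm

lemma peel {m : Type*} [Fintype m] [DecidableEq m] (hinv : ∀ x, σ (σ x) = x)
    (B : Matrix (m ⊕ Fin 1) (m ⊕ Fin 1) F) (hB : IsUnit B) (hherm : mstar σ B = B)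
    (h1 : B.toBlocks₂₂ = 1)
    (IH : ∀ D : Matrix m m F, IsUnit D → mstar σ D = D →
      ∃ h : Matrix m m F, IsUnit h ∧ mstar σ h * h = D) :
    ∃ g, IsUnit g ∧ mstar σ g * g = B := by
  set D := B.toBlocks₁₁ with hD
  set b := B.toBlocks₁₂ with hb
  set c := B.toBlocks₂₁ with hc
  have hBblocks : B = fromBlocks D b c 1 := by
    rw [hD, hb, hc, ← h1, fromBlocks_toBlocks]
  have hblocks := hherm
  rw [hBblocks, mstar_fromBlocks, fromBlocks_inj] at hblocks
  obtain ⟨hDh, hcb, hbc, -⟩ := hblocks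
  set Q : Matrix (m ⊕ Fin 1) (m ⊕ Fin 1) F := fromBlocks 1 0 (-c) 1 with hQ
  have hQunit : IsUnit Q := by
    rw [Matrix.isUnit_iff_isUnit_det, hQ, Matrix.det_fromBlocks_zero₁₂,
      Matrix.det_one, Matrix.det_one, one_mul]
    exact isUnit_one
  have hmQ : mstar σ Q = fromBlocks 1 (-b) 0 1 := by
    rw [hQ, mstar_fromBlocks, mstar_one, mstar_one, mstar_zero, mstar_neg, hcb]
  have key : mstar σ Q * B * Q = fromBlocks (D - b * c) 0 0 1 := by
    rw [hmQ, hBblocks, hQ, fromBlocks_multiply, fromBlocks_multiply]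
    rw [fromBlocks_inj]
    refine ⟨?_, ?_, ?_, ?_⟩ <;>
      simp [Matrix.mul_one, Matrix.one_mul, Matrix.zero_mul, Matrix.mul_zero,
        Matrix.neg_mul, Matrix.mul_neg, sub_eq_add_neg]
  have hDunit : IsUnit (D - b * c) := by
    have hu : IsUnit (mstar σ Q * B * Q) := ((mstar_isUnit σ hQunit).mul hB).mul hQunit
    rw [key, Matrix.isUnit_iff_isUnit_det, Matrix.det_fromBlocks_zero₂₁,
      Matrix.det_one, mul_one] at hu
    exact (Matrix.isUnit_iff_isUnit_det _).mpr hu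
  have hDherm : mstar σ (D - b * c) = D - b * c := by
    rw [mstar_sub, hDh, mstar_mul, hcb, hbc]
  obtain ⟨h, hh, hheq⟩ := IH (D - b * c) hDunit hDherm
  apply congr_solve σ B Q hQunit
  refine ⟨fromBlocks h 0 0 1, ?_, ?_⟩
  · rw [Matrix.isUnit_iff_isUnit_det, Matrix.det_fromBlocks_zero₂₁,
      Matrix.det_one, mul_one]
    exact (Matrix.isUnit_iff_isUnit_det h).mp hh
  · rw [mstar_fromBlocks, mstar_one, mstar_zero, mstar_zero, fromBlocks_multiply, key]
    rw [fromBlocks_inj]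
    refine ⟨?_, ?_, ?_, ?_⟩ <;>
      simp [Matrix.mul_one, Matrix.one_mul, Matrix.zero_mul, Matrix.mul_zero, hheq]

theorem solve_all [Fintype F] {p : ℕ} (hp : p.Prime)
    (hcard : Fintype.card F = p ^ 2)
    (hinv : ∀ x, σ (σ x) = x) (hlam : ∃ l : F, σ l ≠ l) (hσp : ∀ x : F, σ x = x ^ p) :
    ∀ (k : ℕ) (n : Type) (_ : Fintype n) (_ : DecidableEq n) (A : Matrix n n F),
      Fintype.card n = k → IsUnit A → mstar σ A = A →
      ∃ g : Matrix n n F, IsUnit g ∧ mstar σ g * g = A := by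
  intro k
  induction k using Nat.strong_induction_on with
  | _ k IH =>
  intro n instF instD A hn hA hherm
  rcases isEmpty_or_nonempty n with hE | hNE
  · exact ⟨1, isUnit_one, by ext i j; exact (hE.false i).elim⟩
  · obtain ⟨v, hv⟩ := exists_anisotropic σ hlam A hA
    set a : F := (fun i => σ (v i)) ⬝ᵥ A.mulVec v with ha
    have hafix : σ a = a := by
      rw [ha]; exact sigma_dot σ hinv A hherm v v
    have hapfix : a ^ p = a := by rw [← hσp a, hafix]
    have hainv_ne : a⁻¹ ≠ 0 := inv_ne_zero hv
    have hainv_fix : (a⁻¹) ^ p = a⁻¹ := by rw [inv_pow, hapfix]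
    obtain ⟨c, hcnorm⟩ := exists_norm_eq hp hcard hainv_ne hainv_fix
    set w : n → F := c • v with hw
    have hw1 : (fun i => σ (w i)) ⬝ᵥ A.mulVec w = 1 := by
      have e1 : (fun i => σ (w i)) = σ c • (fun i => σ (v i)) := by
        funext i; simp [hw, _root_.map_mul, smul_eq_mul]
      rw [e1, hw, Matrix.mulVec_smul, smul_dotProduct, dotProduct_smul,
        smul_eq_mul, smul_eq_mul, ← ha, hσp c]
      have e2 : c ^ p * (c * a) = c ^ (p + 1) * a := by ring
      rw [e2, hcnorm, inv_mul_cancel₀ hv]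
    have hwne : ∃ i, w i ≠ 0 := by
      by_contra hcon
      push_neg at hcon
      have hz : w = 0 := funext hcon
      rw [hz] at hw1
      simp only [Matrix.mulVec_zero, Pi.zero_apply, map_zero] at hw1
      rw [show (fun _ : n => (0 : F)) = (0 : n → F) from rfl, zero_dotProduct] at hw1
      exact one_ne_zero hw1.symm
    obtain ⟨i, hwi⟩ := hwne
    set P : Matrix n n F := (1 : Matrix n n F).updateCol i w with hP
    have hPunit : IsUnit P := by
      rw [Matrix.isUnit_iff_isUnit_det, hP]
      have hcram : ((1 : Matrix n n F).updateCol i w).det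
          = Matrix.cramer (1 : Matrix n n F) w i := (Matrix.cramer_apply _ _ _).symm
      rw [hcram, Matrix.cramer_one]
      simpa using hwi.isUnit
    have hPcol : ∀ k', P k' i = w k' := by
      intro k'; simp [hP, Matrix.updateCol_apply]
    set B₁ : Matrix n n F := mstar σ P * A * P with hB₁
    have hB₁herm : mstar σ B₁ = B₁ := by
      rw [hB₁, mstar_mul, mstar_mul, mstar_mstar σ hinv, hherm, ← mul_assoc]
    have hB₁unit : IsUnit B₁ := ((mstar_isUnit σ hPunit).mul hA).mul hPunit
    have hB₁ii : B₁ i i = 1 := by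
      rw [hB₁, congr_entry]
      simp only [hPcol]
      exact hw1
    have hk0 : 0 < k := by rw [← hn]; exact Fintype.card_pos
    obtain ⟨M, rfl⟩ : ∃ M, k = M + 1 := ⟨k - 1, by omega⟩
    have e0 : n ≃ Fin (M + 1) := Fintype.equivFinOfCardEq hn
    set f : (Fin M ⊕ Fin 1) ≃ n :=
      (finSumFinEquiv.trans e0.symm).trans
        (Equiv.swap ((finSumFinEquiv.trans e0.symm) (Sum.inr 0)) i) with hf
    have hfi : f (Sum.inr 0) = i := by
      simp only [hf, Equiv.trans_apply]
      exact Equiv.swap_apply_left _ _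
    apply congr_solve σ A P hPunit
    rw [← hB₁]
    apply reindex_solve σ f B₁
    set B : Matrix (Fin M ⊕ Fin 1) (Fin M ⊕ Fin 1) F := B₁.submatrix f f with hB
    have hBunit : IsUnit B := by
      rw [Matrix.isUnit_iff_isUnit_det, hB, Matrix.det_submatrix_equiv_self]
      exact (Matrix.isUnit_iff_isUnit_det B₁).mp hB₁unit
    have hBherm : mstar σ B = B := by
      rw [hB, mstar_submatrix, hB₁herm]
    have hB22 : B.toBlocks₂₂ = 1 := by
      ext x y
      have hx : x = 0 := Subsingleton.elim x 0
      have hy : y = 0 := Subsingleton.elim y 0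
      subst hx; subst hy
      show B (Sum.inr 0) (Sum.inr 0) = (1 : Matrix (Fin 1) (Fin 1) F) 0 0
      rw [Matrix.one_apply_eq]
      show B₁ (f (Sum.inr 0)) (f (Sum.inr 0)) = 1
      rw [hfi]
      exact hB₁ii
    exact peel σ hinv B hBunit hBherm hB22
      (fun D hD hDherm => IH M (by omega) (Fin M) inferInstance inferInstance D
        (Fintype.card_fin M) hD hDherm)

end Stmt4Aux

/-- Every invertible hermitian matrix over the field with `p²` elements (`p` an odd prime)
is congruent to the identity: if `ᵗσ(A) = A` with `A` invertible, then `A = ᵗσ(g) ⬝ g`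
for some invertible `g`, where `σ(x) = x^p` is the Frobenius. -/
theorem stmt4 (p : ℕ) (hp : p.Prime) (hodd : Odd p)
    (F : Type*) [Field F] [Fintype F] (hcard : Fintype.card F = p ^ 2)
    (N : ℕ) (A : Matrix (Fin N) (Fin N) F)
    (hA : IsUnit A) (hherm : (Matrix.transpose (A.map fun x => x ^ p)) = A) :
    ∃ g : Matrix (Fin N) (Fin N) F, IsUnit g ∧ (Matrix.transpose (g.map fun x => x ^ p)) * g = A := by
  haveI : Fact p.Prime := ⟨hp⟩
  haveI : CharP F p := Stmt4Aux.charP_of hp hcard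
  haveI : ExpChar F p := ExpChar.prime hp
  set σ : F →+* F := frobenius F p with hσdef
  have hσp : ∀ x : F, σ x = x ^ p := fun x => frobenius_def p x
  have hfun : (⇑σ : F → F) = fun x => x ^ p := funext hσp
  have hinv : ∀ x : F, σ (σ x) = x := by
    intro x
    rw [hσp, hσp, ← pow_mul, show p * p = p ^ 2 from (sq p).symm, ← hcard,
      FiniteField.pow_card]
  have hlam : ∃ l : F, σ l ≠ l := by
    obtain ⟨l, hl⟩ := Stmt4Aux.exists_nonfixed hp hcard
    exact ⟨l, by rw [hσp]; exact hl⟩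
  have hherm' : Stmt4Aux.mstar σ A = A := by
    show (A.map ⇑σ)ᵀ = A
    rw [hfun]
    exact hherm
  obtain ⟨g, hg, hgeq⟩ := Stmt4Aux.solve_all σ hp hcard hinv hlam hσp N (Fin N)
    inferInstance inferInstance A (Fintype.card_fin N) hA hherm'
  refine ⟨g, hg, ?_⟩
  have : Stmt4Aux.mstar σ g = (Matrix.transpose (g.map fun x => x ^ p)) := by
    show (g.map ⇑σ)ᵀ = _
    rw [hfun]
  rw [← this]
  exact hgeq
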